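/- arXiv:2503.15046 — 6 statements merged into one kernel-verified Lean document; each statement's English description precedes it below -/
import Mathlib

section
/- Let γ have positive imaginary part, q = e^{2iγ}, α with sin α ≠ 0 and θ'(α) ≠ 0, ω = -2cos(2α), and define χ(z) = (1/(4 sin^2 α)) · (1 - (θ'(0)/(2θ'(α))) · (θ(z+α)/θ(z) + θ(z-α)/θ(z))), where θ is the Jacobi-type theta function. Then χ satisfies the difference equation χ(z+2γ) + ω χ(z+γ) + χ(z) = 1 for all z where χ is defined, and χ(0) = 0. -/
/-!
With `τ = γ / π`, the function `θ` is `(2i)⁻¹ e^{iz} ϑ(z/π + (1 + τ)/2, τ)` for Jacobi's `ϑ`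
(pair the terms `n` and `-(n+1)` of `ϑ`), so `θ(z + γ) = -e^{-2iz-iγ} θ(z)`. Hence the shift
`z ↦ z + γ` multiplies `θ(z ± α)/θ(z)` by `e^{∓2iα}`, and both of these are roots of
`x² + ωx + 1`: in `χ(z+2γ) + ωχ(z+γ) + χ(z)` the theta quotients cancel and what is left is
`(2 + ω)/(4 sin² α) = 1`.

At `0` both `θ` and `θ(· + α) + θ(· - α)` vanish (`θ` is odd), so `χ(0)` is the limit
`(1 - θ'(0)/(2θ'(α)) · 2θ'(α)/θ'(0))/(4 sin² α) = 0`, provided `θ'(0) ≠ 0`. Up to a constant,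
`θ'(0) = ∂_zϑ((1 + τ)/2, τ)`. This is `2πi (1 + O(e^{-π}))` when `im τ ≥ 1/2`, it is unchanged by
`τ ↦ τ + 1`, and by the functional equation (`ϑ` vanishes at the half period) it is a nonzero
multiple of its value at `-1/τ`. Translations and inversions bring every `τ` to `im τ ≥ 1/2`.
-/

open Complex Filter Topology
open scoped Real

namespace ChiDifference

lemma tsum_ne_zero_of_norm_le_geometric {E : Type*} [NormedAddCommGroup E] [CompleteSpace E]
    {a : ℕ → E} {x : ℝ} (hx₀ : 0 ≤ x) (hx : x < 1 / 2) (h₀ : ‖a 0‖ = 1)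
    (ha : ∀ n, ‖a (n + 1)‖ ≤ x ^ (n + 1)) : ∑' n, a n ≠ 0 := by
  have hgeom : HasSum (fun n : ℕ ↦ x ^ (n + 1)) (x * (1 - x)⁻¹) := by
    simpa only [pow_succ'] using (hasSum_geometric_of_lt_one hx₀ (by linarith)).mul_left x
  have htail : Summable (fun n ↦ a (n + 1)) := .of_norm_bounded hgeom.summable ha
  have hsmall : ‖∑' n, a (n + 1)‖ < 1 := by
    refine (tsum_of_norm_bounded hgeom ha).trans_lt ?_
    rw [← div_eq_mul_inv, div_lt_one (by linarith)]
    linarith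
  rw [(summable_nat_add_iff 1).mp htail |>.tsum_eq_zero_add]
  intro h
  rw [eq_neg_of_add_eq_zero_right h, norm_neg, h₀] at hsmall
  exact hsmall.false

lemma _root_.Function.Odd.deriv_neg {𝕜 F : Type*} [NontriviallyNormedField 𝕜]
    [NormedAddCommGroup F] [NormedSpace 𝕜 F] {f : 𝕜 → F} (hf : f.Odd) (x : 𝕜) :
    deriv f (-x) = deriv f x := by
  have h := deriv_comp_neg (f := f) (x := x)
  rw [funext hf, ← Pi.neg_def, deriv.neg] at h
  exact (neg_inj.mp h).symm

lemma tendsto_div_of_hasDerivAt {𝕜 : Type*} [NontriviallyNormedField 𝕜] {f g : 𝕜 → 𝕜}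
    {f' g' a : 𝕜} (hf : HasDerivAt f f' a) (hg : HasDerivAt g g' a) (hfa : f a = 0)
    (hga : g a = 0) (hf' : f' ≠ 0) :
    Tendsto (fun x ↦ g x / f x) (𝓝[≠] a) (𝓝 (g' / f')) := by
  refine ((hasDerivAt_iff_tendsto_slope.mp hg).div (hasDerivAt_iff_tendsto_slope.mp hf) hf').congr'
    (eventually_nhdsWithin_of_forall fun x hx ↦ ?_)
  simp only [Pi.div_apply, slope_def_field, hfa, hga, sub_zero]
  exact div_div_div_cancel_right₀ (sub_ne_zero.mpr hx) _ _

lemma recurrence_eq_one_of_shift_eq_mul {M R : Type*} [Semiring M] [CommRing R] {X Y : M → R}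
    {γ : M} {c k E G ω : R} (hX : ∀ z, X (z + γ) = G * X z) (hY : ∀ z, Y (z + γ) = E * Y z)
    (hEG : E * G = 1) (hω : ω = -(E + G)) (hc : c * (2 + ω) = 1) (z : M) :
    c * (1 - k * (X (z + 2 * γ) + Y (z + 2 * γ))) + ω * (c * (1 - k * (X (z + γ) + Y (z + γ)))) +
      c * (1 - k * (X z + Y z)) = 1 := by
  rw [two_mul, ← add_assoc, hX, hX, hY, hY]
  subst hω
  linear_combination hc + c * k * (X z + Y z) * hEG

lemma im_neg_one_div (τ : ℂ) : (-1 / τ).im = τ.im / normSq τ := by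
  rw [neg_div, neg_im, one_div, inv_im, neg_div, neg_neg]

lemma two_mul_im_le_im_neg_one_div {σ : ℂ} (hσ : 0 < σ.im) (hre : |σ.re| ≤ 1 / 2)
    (him : σ.im < 1 / 2) : 2 * σ.im ≤ (-1 / σ).im := by
  have hnorm : 0 < normSq σ := normSq_pos.mpr fun h ↦ by simp [h] at hσ
  have hlt : normSq σ < 1 / 2 := by
    rw [normSq_apply]
    nlinarith [abs_le.mp hre]
  rw [im_neg_one_div, le_div_iff₀ hnorm]
  nlinarith

/-- Every point of the upper half-plane is carried into `{1/2 ≤ im}` by finitely many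
translations and inversions `τ ↦ -1/τ`, each of which at least doubles `im` when `im < 1/2`. -/
theorem upperHalfPlane_induction {P : ℂ → Prop} (hper : Function.Periodic P 1)
    (hinv : ∀ τ, 0 < τ.im → P (-1 / τ) → P τ) (hbase : ∀ τ, 1 / 2 ≤ τ.im → P τ)
    {τ : ℂ} (hτ : 0 < τ.im) : P τ := by
  obtain ⟨k, hk⟩ : ∃ k : ℕ, 1 / (2 * τ.im) < 2 ^ k := pow_unbounded_of_one_lt _ one_lt_two
  rw [div_lt_iff₀ (by positivity)] at hk
  induction k generalizing τ with
  | zero => exact hbase τ (by linarith)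
  | succ k ih =>
    by_cases hbig : 1 / 2 ≤ τ.im
    · exact hbase τ hbig
    set σ := τ - (round τ.re : ℤ) * 1 with hσdef
    have hσim : σ.im = τ.im := by simp [hσdef]
    have hσre : |σ.re| ≤ 1 / 2 := by simpa [hσdef] using abs_sub_round τ.re
    have hσ : 0 < σ.im := hσim ▸ hτ
    have hdouble := two_mul_im_le_im_neg_one_div hσ hσre (by linarith)
    rw [← hper.sub_int_mul_eq (round τ.re)]
    refine hinv σ hσ (ih (hσ.trans_le (by linarith)) ?_)
    rw [pow_succ] at hk
    nlinarith [pow_pos (two_pos (α := ℝ)) k]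

lemma neg_one_zpow_neg_natCast_add_one (n : ℕ) : (-1 : ℂ) ^ (-((n : ℤ) + 1)) = -(-1) ^ n := by
  rw [zpow_neg, ← Nat.cast_succ, zpow_natCast, ← inv_pow, inv_neg_one, pow_succ, mul_neg_one]

lemma jacobiTheta₂_term_add_half_period (n : ℤ) (z τ : ℂ) :
    jacobiTheta₂_term n (z + (1 / 2 + τ / 2)) τ =
      (-1) ^ n * cexp (π * I * τ * (n * (n + 1))) * cexp (2 * π * I * n * z) := by
  rw [jacobiTheta₂_term, ← exp_pi_mul_I, ← exp_int_mul, ← exp_add, ← exp_add]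
  ring_nf

lemma jacobiTheta₂_term_add_half_period_pair (n : ℕ) (z τ : ℂ) :
    cexp (π * I * z) * (jacobiTheta₂_term n (z + (1 / 2 + τ / 2)) τ +
        jacobiTheta₂_term (-(n + 1)) (z + (1 / 2 + τ / 2)) τ) =
      2 * I * ((-1) ^ n * cexp (π * I * τ * (n * (n + 1)))) * sin (π * (2 * n + 1) * z) := by
  simp only [jacobiTheta₂_term_add_half_period, neg_one_zpow_neg_natCast_add_one, zpow_natCast]
  have hτ : ((-((n : ℤ) + 1) : ℤ) : ℂ) * ((-((n : ℤ) + 1) : ℤ) + 1) = n * (n + 1) := by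
    push_cast; ring
  have h₁ : cexp (π * I * z) * cexp (2 * π * I * n * z) = cexp (π * (2 * n + 1) * z * I) := by
    rw [← exp_add]; ring_nf
  have h₂ : cexp (π * I * z) * cexp (2 * π * I * ((-((n : ℤ) + 1) : ℤ) : ℂ) * z) =
      cexp (-(π * (2 * n + 1) * z) * I) := by
    rw [← exp_add]; push_cast; ring_nf
  rw [hτ, sin, ← h₁, ← h₂]
  push_cast
  ring_nf
  rw [I_sq]
  ring

lemma hasSum_jacobiTheta₂_add_half_period (z : ℂ) {τ : ℂ} (hτ : 0 < τ.im) :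
    HasSum (fun n : ℕ ↦ 2 * I * ((-1) ^ n * cexp (π * I * τ * (n * (n + 1)))) *
        sin (π * (2 * n + 1) * z))
      (cexp (π * I * z) * jacobiTheta₂ (z + (1 / 2 + τ / 2)) τ) :=
  ((hasSum_jacobiTheta₂_term _ hτ).nat_add_neg_add_one.mul_left _).congr_fun fun n ↦
    (jacobiTheta₂_term_add_half_period_pair n z τ).symm

lemma jacobiTheta₂_half_period {τ : ℂ} (hτ : 0 < τ.im) : jacobiTheta₂ (1 / 2 + τ / 2) τ = 0 := by
  have h := hasSum_jacobiTheta₂_add_half_period 0 hτ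
  simp only [mul_zero, sin_zero, zero_add, exp_zero, one_mul] at h
  exact h.unique hasSum_zero

lemma hasSum_jacobiTheta₂'_half_period {τ : ℂ} (hτ : 0 < τ.im) :
    HasSum (fun n : ℕ ↦ 2 * π * I * ((2 * n + 1) * ((-1) ^ n * cexp (π * I * τ * (n * (n + 1))))))
      (jacobiTheta₂' (1 / 2 + τ / 2) τ) := by
  refine (hasSum_jacobiTheta₂'_term _ hτ).nat_add_neg_add_one.congr_fun fun n ↦ ?_
  have h (m : ℤ) := jacobiTheta₂_term_add_half_period m 0 τ
  simp only [zero_add, mul_zero, exp_zero, mul_one] at h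
  simp only [jacobiTheta₂'_term, h, neg_one_zpow_neg_natCast_add_one, zpow_natCast]
  push_cast
  ring_nf

lemma six_lt_exp_pi : 6 < Real.exp π := by
  have h : (π / 2 + 1) ^ 2 ≤ Real.exp π := calc
    _ ≤ Real.exp (π / 2) ^ 2 := pow_le_pow_left₀ (by positivity) (Real.add_one_le_exp _) 2
    _ = Real.exp π := by rw [← Real.exp_nat_mul]; ring_nf
  nlinarith [Real.pi_gt_three]

lemma norm_half_period_term_le {τ : ℂ} (hτ : 1 / 2 ≤ τ.im) (n : ℕ) :
    ‖(2 * n + 1 : ℂ) * ((-1) ^ n * cexp (π * I * τ * (n * (n + 1))))‖ ≤ (3 * Real.exp (-π)) ^ n := by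
  have hre : (π * I * τ * (n * (n + 1))).re = -(π * τ.im * (n * (n + 1))) := by
    simp [mul_re, mul_im]
  rw [norm_mul, norm_mul, norm_pow, norm_neg, norm_one, one_pow, one_mul, norm_exp, hre,
    mul_pow, ← Real.exp_nat_mul]
  have h2n : ‖(2 * n + 1 : ℂ)‖ = 2 * n + 1 := by exact_mod_cast Complex.norm_natCast (2 * n + 1)
  rw [h2n]
  gcongr
  · have h := one_add_mul_le_pow (by norm_num : (-2 : ℝ) ≤ 2) n
    norm_num at h
    linarith
  · have hn : (n : ℝ) ≤ τ.im * (n * (n + 1)) := by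
      nlinarith [mul_le_mul_of_nonneg_right hτ (by positivity : (0 : ℝ) ≤ n * (n + 1)),
        (by exact_mod_cast Nat.le_mul_self n : (n : ℝ) ≤ n * n)]
    nlinarith [mul_le_mul_of_nonneg_left hn Real.pi_pos.le]

lemma jacobiTheta₂'_half_period_ne_zero_of_half_le_im {τ : ℂ} (hτ : 1 / 2 ≤ τ.im) :
    jacobiTheta₂' (1 / 2 + τ / 2) τ ≠ 0 := by
  have hs := hasSum_jacobiTheta₂'_half_period (τ := τ) (by linarith)
  rw [← hs.tsum_eq, tsum_mul_left]
  refine mul_ne_zero (by simp [Real.pi_ne_zero]) <|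
    tsum_ne_zero_of_norm_le_geometric (by positivity) ?_ (by simp)
      fun n ↦ norm_half_period_term_le hτ (n + 1)
  rw [Real.exp_neg, ← div_eq_mul_inv, div_lt_iff₀ (Real.exp_pos _)]
  linarith [six_lt_exp_pi]

lemma jacobiTheta₂_term_add_one_right (n : ℤ) (z τ : ℂ) :
    jacobiTheta₂_term n z (τ + 1) = jacobiTheta₂_term n (z + 1 / 2) τ := by
  obtain ⟨k, hk⟩ := Int.even_mul_pred_self n
  have hk' : ((n : ℂ) * (n - 1)) = k + k := by exact_mod_cast hk
  have harg : 2 * π * I * n * z + π * I * n ^ 2 * (τ + 1) =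
      2 * π * I * n * (z + 1 / 2) + π * I * n ^ 2 * τ + k * (2 * π * I) := by
    linear_combination π * I * hk'
  rw [jacobiTheta₂_term, jacobiTheta₂_term, harg, exp_add, exp_int_mul_two_pi_mul_I, mul_one]

lemma jacobiTheta₂'_add_one_right (z τ : ℂ) :
    jacobiTheta₂' z (τ + 1) = jacobiTheta₂' (z + 1 / 2) τ := by
  simp only [jacobiTheta₂', jacobiTheta₂'_term, jacobiTheta₂_term_add_one_right]

lemma periodic_jacobiTheta₂'_half_period :
    Function.Periodic (fun τ ↦ jacobiTheta₂' (1 / 2 + τ / 2) τ) 1 := fun τ ↦ by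
  dsimp only
  rw [jacobiTheta₂'_add_one_right, show 1 / 2 + (τ + 1) / 2 + 1 / 2 = 1 / 2 + τ / 2 + 1 by ring,
    jacobiTheta₂'_add_left]

lemma jacobiTheta₂_one_sub (z τ : ℂ) : jacobiTheta₂ (1 - z) τ = jacobiTheta₂ z τ := by
  rw [sub_eq_neg_add, jacobiTheta₂_add_left, jacobiTheta₂_neg_left]

lemma jacobiTheta₂'_one_sub (z τ : ℂ) : jacobiTheta₂' (1 - z) τ = -jacobiTheta₂' z τ := by
  rw [sub_eq_neg_add, jacobiTheta₂'_add_left, jacobiTheta₂'_neg_left]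

lemma jacobiTheta₂'_half_period_ne_zero_of_neg_one_div {τ : ℂ} (hτ : 0 < τ.im)
    (h : jacobiTheta₂' (1 / 2 + (-1 / τ) / 2) (-1 / τ) ≠ 0) :
    jacobiTheta₂' (1 / 2 + τ / 2) τ ≠ 0 := by
  have hτ₀ : τ ≠ 0 := by rintro rfl; simp at hτ
  have hτ' : 0 < (-1 / τ).im := by rw [im_neg_one_div]; exact div_pos hτ (normSq_pos.mpr hτ₀)
  have hz : (1 / 2 + τ / 2) / τ = 1 - (1 / 2 + (-1 / τ) / 2) := by field_simp; ring
  rw [jacobiTheta₂'_functional_equation, hz, jacobiTheta₂_one_sub, jacobiTheta₂'_one_sub,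
    jacobiTheta₂_half_period hτ', mul_zero, sub_zero]
  have hsqrt : (-I * τ) ^ (1 / 2 : ℂ) ≠ 0 := by
    rw [Ne, cpow_eq_zero_iff]
    exact fun h ↦ mul_ne_zero (neg_ne_zero.mpr I_ne_zero) hτ₀ h.1
  exact mul_ne_zero (div_ne_zero (mul_ne_zero (one_div_ne_zero hsqrt) (exp_ne_zero _)) hτ₀)
    (neg_ne_zero.mpr h)

theorem jacobiTheta₂'_half_period_ne_zero {τ : ℂ} (hτ : 0 < τ.im) :
    jacobiTheta₂' (1 / 2 + τ / 2) τ ≠ 0 :=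
  upperHalfPlane_induction (periodic_jacobiTheta₂'_half_period.comp (· ≠ 0))
    (fun _ ↦ jacobiTheta₂'_half_period_ne_zero_of_neg_one_div)
    (fun _ ↦ jacobiTheta₂'_half_period_ne_zero_of_half_le_im) hτ

lemma exp_two_mul_pow_triangle (w : ℂ) (n : ℕ) :
    cexp (2 * w) ^ (n * (n + 1) / 2) = cexp (w * (n * (n + 1))) := by
  rw [← exp_nat_mul, Nat.cast_div (Nat.even_mul_succ_self n).two_dvd two_ne_zero]
  push_cast
  ring_nf

noncomputable def theta (γ z : ℂ) : ℂ :=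
  ∑' n : ℕ, ((-1) ^ n * cexp (2 * I * γ) ^ (n * (n + 1) / 2)) * sin ((2 * (n : ℂ) + 1) * z)

variable {γ : ℂ}

lemma im_div_pi_pos (hγ : 0 < γ.im) : 0 < (γ / π).im := by
  rw [div_ofReal_im]
  exact div_pos hγ Real.pi_pos

lemma theta_eq_jacobiTheta₂ (hγ : 0 < γ.im) (z : ℂ) :
    theta γ z = (2 * I)⁻¹ * cexp (I * z) * jacobiTheta₂ (z / π + (1 / 2 + γ / π / 2)) (γ / π) := by
  have hπ : (π : ℂ) ≠ 0 := ofReal_ne_zero.mpr Real.pi_ne_zero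
  have hτ := im_div_pi_pos hγ
  have h := (hasSum_jacobiTheta₂_add_half_period (z / π) hτ).mul_left (2 * I)⁻¹
  have e₁ : (π : ℂ) * I * (γ / π) = I * γ := by field_simp
  have e₂ (n : ℕ) : (π : ℂ) * (2 * n + 1) * (z / π) = (2 * n + 1) * z := by field_simp
  have e₃ : (π : ℂ) * I * (z / π) = I * z := by field_simp
  simp only [e₁, e₂, e₃] at h
  rw [theta, mul_assoc (2 * I)⁻¹, ← h.tsum_eq]
  refine tsum_congr fun n ↦ ?_
  rw [mul_assoc 2 I, exp_two_mul_pow_triangle]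
  field_simp

lemma theta_add_period (hγ : 0 < γ.im) (z : ℂ) :
    theta γ (z + γ) = -cexp (-(2 * I * z) - I * γ) * theta γ z := by
  have hπ : (π : ℂ) ≠ 0 := ofReal_ne_zero.mpr Real.pi_ne_zero
  rw [theta_eq_jacobiTheta₂ hγ, theta_eq_jacobiTheta₂ hγ,
    show (z + γ) / π + (1 / 2 + γ / π / 2) = z / π + (1 / 2 + γ / π / 2) + γ / π by ring,
    jacobiTheta₂_add_left']
  have hexp : cexp (I * (z + γ)) * cexp (-π * I * (γ / π + 2 * (z / π + (1 / 2 + γ / π / 2)))) =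
      -cexp (-(2 * I * z) - I * γ) * cexp (I * z) := by
    rw [← exp_add, show I * (z + γ) + -π * I * (γ / π + 2 * (z / π + (1 / 2 + γ / π / 2))) =
      -(2 * I * z) - I * γ + I * z + -(π * I) by field_simp; ring, exp_add, exp_add, exp_neg,
      exp_pi_mul_I]
    ring
  linear_combination (2 * I)⁻¹ * jacobiTheta₂ (z / π + (1 / 2 + γ / π / 2)) (γ / π) * hexp

lemma theta_odd : (theta γ).Odd := fun z ↦ by
  simp only [theta, ← tsum_neg, mul_neg, sin_neg]

lemma hasDerivAt_theta (hγ : 0 < γ.im) (z : ℂ) :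
    HasDerivAt (theta γ) ((2 * I)⁻¹ * cexp (I * z) *
      (I * jacobiTheta₂ (z / π + (1 / 2 + γ / π / 2)) (γ / π) +
        jacobiTheta₂' (z / π + (1 / 2 + γ / π / 2)) (γ / π) / π)) z := by
  have hτ := im_div_pi_pos hγ
  have hϑ := (hasDerivAt_jacobiTheta₂_fst _ hτ).comp z
    (((hasDerivAt_id z).div_const (π : ℂ)).add_const (1 / 2 + γ / π / 2))
  have hexp := ((hasDerivAt_id z).const_mul I).cexp.const_mul (2 * I)⁻¹
  rw [funext (theta_eq_jacobiTheta₂ hγ)]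
  exact (hexp.mul hϑ).congr_deriv (by simp only [id, Function.comp_apply]; ring)

lemma differentiable_theta (hγ : 0 < γ.im) : Differentiable ℂ (theta γ) :=
  fun z ↦ (hasDerivAt_theta hγ z).differentiableAt

lemma deriv_theta_zero (hγ : 0 < γ.im) :
    deriv (theta γ) 0 = jacobiTheta₂' (1 / 2 + γ / π / 2) (γ / π) / (2 * π * I) := by
  have hτ := im_div_pi_pos hγ
  rw [(hasDerivAt_theta hγ 0).deriv, zero_div, zero_add, jacobiTheta₂_half_period hτ,
    mul_zero, exp_zero]
  field_simp
  ring

lemma deriv_theta_zero_ne_zero (hγ : 0 < γ.im) : deriv (theta γ) 0 ≠ 0 := by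
  have hτ := im_div_pi_pos hγ
  rw [deriv_theta_zero hγ]
  exact div_ne_zero (jacobiTheta₂'_half_period_ne_zero hτ) (by simp [Real.pi_ne_zero])

lemma theta_div_add_period (hγ : 0 < γ.im) (z β : ℂ) :
    theta γ (z + γ + β) / theta γ (z + γ) = cexp (-(2 * I * β)) * (theta γ (z + β) / theta γ z) := by
  rw [add_right_comm, theta_add_period hγ, theta_add_period hγ, mul_div_mul_comm, neg_div_neg_eq,
    ← exp_sub]
  ring_nf

lemma theta_sub_div_add_period (hγ : 0 < γ.im) (z β : ℂ) :
    theta γ (z + γ - β) / theta γ (z + γ) = cexp (2 * I * β) * (theta γ (z - β) / theta γ z) := by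
  simpa only [← sub_eq_add_neg, mul_neg, neg_neg] using theta_div_add_period hγ z (-β)

lemma tendsto_theta_add_add_theta_sub_div (hγ : 0 < γ.im) (α : ℂ) :
    Tendsto (fun w ↦ (theta γ (w + α) + theta γ (w - α)) / theta γ w) (𝓝[≠] 0)
      (𝓝 (2 * deriv (theta γ) α / deriv (theta γ) 0)) := by
  have hd := differentiable_theta hγ
  have hg := ((hd (0 + α)).hasDerivAt.comp_add_const 0 α).add
    ((hd (0 - α)).hasDerivAt.comp_sub_const 0 α)
  simp only [zero_add, zero_sub, theta_odd.deriv_neg, ← two_mul] at hg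
  exact tendsto_div_of_hasDerivAt (hd 0).hasDerivAt hg theta_odd.map_zero
    (by simp [theta_odd.eq]) (deriv_theta_zero_ne_zero hγ)

end ChiDifference

open ChiDifference in
/-- Let `Im γ > 0`, `q = e^{2iγ}`, `sin α ≠ 0`, `θ'(α) ≠ 0`, `ω = -2cos(2α)`, and
`χ(z) = (1/(4 sin² α)) (1 - (θ'(0)/(2θ'(α))) (θ(z+α)/θ(z) + θ(z-α)/θ(z)))`,
where `θ(z) = Σ_{n≥0} (-1)^n q^{n(n+1)/2} sin((2n+1)z)`. Then `χ` satisfies the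
difference equation `χ(z+2γ) + ω χ(z+γ) + χ(z) = 1` wherever it is defined, and
`χ(0) = 0` (as a removable-singularity limit). -/
theorem chi_difference_equation (γ α : ℂ) (hγ : 0 < γ.im) (hα : Complex.sin α ≠ 0) :
    let q : ℂ := Complex.exp (2 * Complex.I * γ)
    let θ : ℂ → ℂ := fun z =>
      ∑' n : ℕ, ((-1) ^ n * q ^ (n * (n + 1) / 2)) * Complex.sin ((2 * (n : ℂ) + 1) * z)
    let ω : ℂ := -2 * Complex.cos (2 * α)
    let χ : ℂ → ℂ := fun z => (1 / (4 * Complex.sin α ^ 2)) *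
      (1 - (deriv θ 0 / (2 * deriv θ α)) * (θ (z + α) / θ z + θ (z - α) / θ z))
    deriv θ α ≠ 0 →
      (∀ z : ℂ, θ z ≠ 0 → θ (z + γ) ≠ 0 → θ (z + 2 * γ) ≠ 0 →
        χ (z + 2 * γ) + ω * χ (z + γ) + χ z = 1) ∧
      Filter.Tendsto χ (nhdsWithin 0 {(0 : ℂ)}ᶜ) (nhds 0) := by
  intro q θ ω χ hθα
  refine ⟨fun z _ _ _ ↦ ?_, ?_⟩
  · have hω : -2 * cos (2 * α) = -(cexp (2 * I * α) + cexp (-(2 * I * α))) := by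
      rw [← mul_right_comm, ← neg_mul, ← two_cos]
      ring
    have hc : 1 / (4 * sin α ^ 2) * (2 + -2 * cos (2 * α)) = 1 := by
      rw [cos_two_mul_eq_one_sub]
      field_simp
      ring
    exact recurrence_eq_one_of_shift_eq_mul (X := fun z ↦ θ (z + α) / θ z)
      (Y := fun z ↦ θ (z - α) / θ z) (theta_div_add_period hγ · α)
      (theta_sub_div_add_period hγ · α) (by rw [← exp_add, add_neg_cancel, exp_zero]) hω hc z
  · have h₀ : deriv θ 0 ≠ 0 := deriv_theta_zero_ne_zero hγ
    have hratio : Tendsto (fun w ↦ (θ (w + α) + θ (w - α)) / θ w) (𝓝[≠] 0)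
        (𝓝 (2 * deriv θ α / deriv θ 0)) := tendsto_theta_add_add_theta_sub_div hγ α
    have hk : deriv θ 0 / (2 * deriv θ α) * (2 * deriv θ α / deriv θ 0) = 1 := by
      field_simp
    have hlim := ((hratio.const_mul (deriv θ 0 / (2 * deriv θ α))).const_sub 1).const_mul
      (1 / (4 * sin α ^ 2))
    rw [hk, sub_self, mul_zero] at hlim
    exact hlim.congr fun w ↦ by simp only [χ, add_div]
end

section
/- Let M(x) be a formal power series in t whose coefficients are Laurent series in x, of the form M(x) = (t/x)(1 + O(t/x) + O(x)), i.e., M ∈ (t/x)·ℂ[[t/x, x]] with the coefficient of t/x equal to 1. If I(x) is a formal power series in x and t with coefficients in ℂ, lying in x·ℂ[[x,t]] (no constant term in x), and I(M(x)) = I(x), then I(x) = 0. -/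
section Aux

variable {R : Type*} [CommRing R]

lemma hahn_coeff_sum {α : Type*} (s : Finset α) (f : α → HahnSeries ℤ R) (e : ℤ) :
    (∑ i ∈ s, f i).coeff e = ∑ i ∈ s, (f i).coeff e := by
  classical
  induction s using Finset.cons_induction with
  | empty => simp
  | cons a s ha ih => rw [Finset.sum_cons, Finset.sum_cons, HahnSeries.coeff_add, ih]

lemma mul_coeff_zero_of_lt (x y : HahnSeries ℤ R) (p q : ℤ)
    (hx : ∀ i < p, x.coeff i = 0) (hy : ∀ i < q, y.coeff i = 0) :
    ∀ e < p + q, (x * y).coeff e = 0 := by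
  intro e he
  rw [HahnSeries.coeff_mul]
  apply Finset.sum_eq_zero
  rintro ⟨i, j⟩ hij
  rw [Finset.mem_addAntidiagonal] at hij
  obtain ⟨hi, hj, hsum⟩ := hij
  exfalso
  have h1 : p ≤ i := le_of_not_gt fun h => hi (hx i h)
  have h2 : q ≤ j := le_of_not_gt fun h => hj (hy j h)
  omega

lemma mul_coeff_lead (x y : HahnSeries ℤ R) (p q : ℤ)
    (hx : ∀ i < p, x.coeff i = 0) (hy : ∀ i < q, y.coeff i = 0) :
    (x * y).coeff (p + q) = x.coeff p * y.coeff q := by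
  rw [HahnSeries.coeff_mul]
  rw [Finset.sum_eq_single (p, q)]
  · rintro ⟨i, j⟩ hij hne
    rw [Finset.mem_addAntidiagonal] at hij
    obtain ⟨hi, hj, hsum⟩ := hij
    exfalso
    have h1 : p ≤ i := le_of_not_gt fun h => hi (hx i h)
    have h2 : q ≤ j := le_of_not_gt fun h => hj (hy j h)
    have : i = p ∧ j = q := by omega
    exact hne (by simp [this.1, this.2])
  · intro h
    by_cases hxp : x.coeff p = 0
    · rw [hxp, zero_mul]
    by_cases hyq : y.coeff q = 0
    · rw [hyq, mul_zero]
    exfalso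
    exact h (Finset.mem_addAntidiagonal.mpr ⟨hxp, hyq, rfl⟩)

lemma pow_props (M : LaurentSeries (LaurentSeries ℂ))
    (hM0 : ∀ d : ℤ, d ≤ 0 → M.coeff d = 0)
    (hMsupp : ∀ d e : ℤ, e < -d → (M.coeff d).coeff e = 0)
    (hMlead : (M.coeff 1).coeff (-1) = 1) :
    ∀ k : ℕ, (∀ d : ℤ, d < (k : ℤ) + 1 → (M ^ (k + 1)).coeff d = 0) ∧
      (∀ d e : ℤ, e < -d → ((M ^ (k + 1)).coeff d).coeff e = 0) ∧
      ((M ^ (k + 1)).coeff ((k : ℤ) + 1)).coeff (-((k : ℤ) + 1)) = 1 := by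
  intro k
  induction k with
  | zero =>
    simp only [pow_one, Nat.cast_zero, zero_add]
    exact ⟨fun d hd => hM0 d (by omega), hMsupp, hMlead⟩
  | succ k ih =>
    obtain ⟨ih1, ih2, ih3⟩ := ih
    have hstep : M ^ (k + 1 + 1) = M ^ (k + 1) * M := pow_succ M (k + 1)
    refine ⟨?_, ?_, ?_⟩
    · intro d hd
      rw [hstep]
      refine mul_coeff_zero_of_lt _ _ ((k : ℤ) + 1) 1 ih1 (fun i hi => hM0 i (by omega)) d ?_
      push_cast at hd ⊢
      omega
    · intro d e he
      rw [hstep, HahnSeries.coeff_mul, hahn_coeff_sum]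
      apply Finset.sum_eq_zero
      rintro ⟨i, j⟩ hij
      rw [Finset.mem_addAntidiagonal] at hij
      obtain ⟨_, _, hsum⟩ := hij
      exact mul_coeff_zero_of_lt _ _ (-i) (-j) (fun e' he' => ih2 i e' he')
        (fun e' he' => hMsupp j e' he') e (by omega)
    · rw [hstep]
      have h1 : (((k : ℕ) + 1 : ℕ) : ℤ) + 1 = ((k : ℤ) + 1) + 1 := by push_cast; ring
      rw [h1, mul_coeff_lead (M ^ (k + 1)) M ((k : ℤ) + 1) 1 ih1
        (fun i hi => hM0 i (by omega))]
      have h2 : -(((k : ℤ) + 1) + 1) = -((k : ℤ) + 1) + (-1) := by ring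
      rw [h2, mul_coeff_lead _ _ (-((k : ℤ) + 1)) (-1)
        (fun i hi => ih2 ((k : ℤ) + 1) i (by omega))
        (fun i hi => hMsupp 1 i (by omega)), ih3, hMlead, one_mul]

end Aux

/-- The invariant lemma. We work in `ℂ((x))((t))`, realised as iterated Laurent
(Hahn) series, outer variable `t`, inner variable `x`.

`M ∈ (t/x)·ℂ[[t/x, x]]` with coefficient of `t/x` equal to `1`: it is a multiple
of `t` (`hM0`), its `t^d`-coefficient has `x`-valuation `≥ -d` (`hMsupp`), and
`[t x^{-1}] M = 1` (`hMlead`).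

`I ∈ x·ℂ[[x,t]]`: a power series in `t` (`hI0`) whose `t`-coefficients are power
series in `x` with no constant term (`hIx`). The invariance `I(M(x)) = I(x)` is
expressed coefficient-wise by the substitution formula
`[t^d x^e] I(M) = Σ_{j,n} ([t^j x^n] I) · [t^{d-j} x^e] M^n` (hypothesis `hinv`,
the finite ranges capturing all nonzero contributions). Then `I = 0`. -/
theorem invariant_lemma (M I : LaurentSeries (LaurentSeries ℂ))
    (hM0 : ∀ d : ℤ, d ≤ 0 → M.coeff d = 0)
    (hMsupp : ∀ d e : ℤ, e < -d → (M.coeff d).coeff e = 0)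
    (hMlead : (M.coeff 1).coeff (-1) = 1)
    (hI0 : ∀ d : ℤ, d < 0 → I.coeff d = 0)
    (hIx : ∀ d e : ℤ, e ≤ 0 → (I.coeff d).coeff e = 0)
    (hinv : ∀ d e : ℤ, (I.coeff d).coeff e =
      ∑ j ∈ Finset.Icc (0 : ℤ) (d + e), ∑ n ∈ Finset.Icc (1 : ℤ) (d - j),
        ((I.coeff j).coeff n) * (((M ^ n).coeff (d - j)).coeff e)) :
    I = 0 := by
  classical
  by_contra hne
  -- there is a nonzero coefficient
  have hex : ∃ j n : ℤ, (I.coeff j).coeff n ≠ 0 := by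
    by_contra h
    push_neg at h
    apply hne
    ext d e
    simp [h d e]
  -- basic bounds on nonzero coefficients
  have hbnd : ∀ j n : ℤ, (I.coeff j).coeff n ≠ 0 → 0 ≤ j ∧ 1 ≤ n := by
    intro j n h
    constructor
    · by_contra hj
      push_neg at hj
      rw [hI0 j hj] at h
      simp at h
    · by_contra hn
      push_neg at hn
      exact h (hIx j n (by omega))
  -- least total degree N
  set P : ℤ → Prop := fun m => ∃ j n : ℤ, j + n = m ∧ (I.coeff j).coeff n ≠ 0 with hP
  have hPbdd : ∃ b : ℤ, ∀ z : ℤ, P z → b ≤ z := by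
    refine ⟨1, ?_⟩
    rintro z ⟨j, n, rfl, h⟩
    have := hbnd j n h
    omega
  have hPinh : ∃ z : ℤ, P z := by
    obtain ⟨j, n, h⟩ := hex
    exact ⟨j + n, j, n, rfl, h⟩
  obtain ⟨N, hPN, hNmin⟩ := Int.exists_least_of_bdd hPbdd hPinh
  -- least j with (I.coeff j).coeff (N - j) ≠ 0
  set Q : ℤ → Prop := fun j => (I.coeff j).coeff (N - j) ≠ 0 with hQ
  have hQbdd : ∃ b : ℤ, ∀ z : ℤ, Q z → b ≤ z := ⟨0, fun z h => (hbnd z (N - z) h).1⟩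
  have hQinh : ∃ z : ℤ, Q z := by
    obtain ⟨j, n, hjn, h⟩ := hPN
    refine ⟨j, show (I.coeff j).coeff (N - j) ≠ 0 from ?_⟩
    rw [show N - j = n by omega]; exact h
  obtain ⟨js, hQjs, hjmin⟩ := Int.exists_least_of_bdd hQbdd hQinh
  have hQjs' : (I.coeff js).coeff (N - js) ≠ 0 := hQjs
  have hjs0 : 0 ≤ js := (hbnd js (N - js) hQjs').1
  have hns1 : 1 ≤ N - js := (hbnd js (N - js) hQjs').2
  -- the invariance at (N, -(N - js))
  have key := hinv N (-(N - js))
  rw [hIx N (-(N - js)) (by omega)] at key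
  have hNr : N + -(N - js) = js := by omega
  rw [hNr] at key
  -- outer sum reduces to j = js
  have houter : ∀ j ∈ Finset.Icc (0 : ℤ) js, j ≠ js →
      (∑ n ∈ Finset.Icc (1 : ℤ) (N - j),
        ((I.coeff j).coeff n) * (((M ^ n).coeff (N - j)).coeff (-(N - js)))) = 0 := by
    intro j hj hjne
    apply Finset.sum_eq_zero
    intro n hn
    rcases eq_or_ne ((I.coeff j).coeff n) 0 with h | h
    · rw [h, zero_mul]
    exfalso
    have h1 : N ≤ j + n := hNmin (j + n) ⟨j, n, rfl, h⟩
    have hn2 : n ≤ N - j := (Finset.mem_Icc.mp hn).2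
    have hEq : n = N - j := by omega
    have h2 : js ≤ j := hjmin j (show (I.coeff j).coeff (N - j) ≠ 0 from hEq ▸ h)
    have hj2 : j ≤ js := (Finset.mem_Icc.mp hj).2
    omega
  rw [Finset.sum_eq_single_of_mem js (Finset.mem_Icc.mpr ⟨hjs0, le_refl js⟩) houter] at key
  -- inner sum reduces to n = N - js
  have hinner : ∀ n ∈ Finset.Icc (1 : ℤ) (N - js), n ≠ N - js →
      ((I.coeff js).coeff n) * (((M ^ n).coeff (N - js)).coeff (-(N - js))) = 0 := by
    intro n hn hne'
    rcases eq_or_ne ((I.coeff js).coeff n) 0 with h | h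
    · rw [h, zero_mul]
    exfalso
    have h1 : N ≤ js + n := hNmin (js + n) ⟨js, n, rfl, h⟩
    have hn2 : n ≤ N - js := (Finset.mem_Icc.mp hn).2
    omega
  rw [Finset.sum_eq_single_of_mem (N - js)
    (Finset.mem_Icc.mpr ⟨hns1, le_refl _⟩) hinner] at key
  -- leading coefficient of M ^ (N - js)
  have hz : M ^ (N - js) = M ^ ((N - js).toNat) := by
    conv_lhs => rw [show (N - js) = (((N - js).toNat : ℕ) : ℤ) from
      (Int.toNat_of_nonneg (by omega)).symm]
    exact zpow_natCast M _
  obtain ⟨k, hk⟩ : ∃ k : ℕ, (N - js).toNat = k + 1 := ⟨(N - js).toNat - 1, by omega⟩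
  obtain ⟨-, -, h3⟩ := pow_props M hM0 hMsupp hMlead k
  have hcast : (N - js) = (k : ℤ) + 1 := by omega
  have hlead : ((M ^ (N - js)).coeff (N - js)).coeff (-(N - js)) = 1 := by
    rw [hz, hk, hcast]
    exact h3
  rw [hlead, mul_one] at key
  exact hQjs' key.symm
end

section
/- Let u be a nonzero element of a field (of characteristic 0) with u ≠ 1, set ω = -u - u^{-1} and c_j = (u^j - u - 1 + u^{1-j})/(u-1). Let x, M be elements of a commutative ring extension, let F = xM(1 - ωx - M), so that F/x = M(1 - ωx - M), and define B_j = (u^j - u^{-j})M - (u^{j-1} - u^{1-j})x + c_j. Then for every integer j: B_j · B_{-j} = (u^j - u^{-j})^2 · (F/x) - ((u^{j-1} - u^{1-j})x - c_j) · ((u^{j+1} - u^{-j-1})x + c_{j+1}). -/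
set_option maxHeartbeats 4000000 in
/-- Let `u ≠ 0, 1` in a field of characteristic zero, `ω = -u - u⁻¹`,
`c_j = (u^j - u - 1 + u^{1-j})/(u-1)`, `F = xM(1 - ωx - M)` (the case `t(v-1) = 0`),
and `B_j = (u^j - u^{-j})M - (u^{j-1} - u^{1-j})x + c_j`. Then for every integer `j`,
`B_j B_{-j} = (u^j - u^{-j})² (F/x) - ((u^{j-1} - u^{1-j})x - c_j)((u^{j+1} - u^{-j-1})x + c_{j+1})`. -/
theorem B_j_product_identity {L : Type} [Field L] [CharZero L]
    (u x M : L) (hu0 : u ≠ 0) (hu1 : u ≠ 1) (hx : x ≠ 0) :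
    let ω : L := -u - u⁻¹
    let F : L := x * M * (1 - ω * x - M)
    let c : ℤ → L := fun j => (u ^ j - u - 1 + u ^ (1 - j)) / (u - 1)
    let B : ℤ → L := fun j => (u ^ j - u ^ (-j)) * M - (u ^ (j - 1) - u ^ (1 - j)) * x + c j
    ∀ j : ℤ, B j * B (-j) =
      (u ^ j - u ^ (-j)) ^ 2 * (F / x) -
        ((u ^ (j - 1) - u ^ (1 - j)) * x - c j) *
          ((u ^ (j + 1) - u ^ (-j - 1)) * x + c (j + 1)) := by
  intro ω F c B j
  have hw : u ^ j ≠ 0 := zpow_ne_zero _ hu0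
  have hu1' : u - 1 ≠ 0 := sub_ne_zero.mpr hu1
  simp only [ω, F, c, B]
  have e1 : ∀ a b : ℤ, u ^ (a - b) = u ^ a / u ^ b := fun a b => zpow_sub₀ hu0 a b
  have e2 : ∀ a b : ℤ, u ^ (a + b) = u ^ a * u ^ b := fun a b => zpow_add₀ hu0 a b
  have e3 : u ^ (-j) = (u ^ j)⁻¹ := zpow_neg u j
  have e4 : u ^ (1 : ℤ) = u := zpow_one u
  simp only [sub_eq_add_neg, neg_add_rev, neg_neg, e1, e2, e3, e4, zpow_neg, zpow_one]
  set w := u ^ j with hwdef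
  have hw2 : w ≠ 0 := hw
  clear_value w
  clear hwdef e1 e2 e3 e4 hw
  have hw : w ≠ 0 := hw2
  have h5 : -w + w * u ≠ 0 := by
    intro h; apply hu1'; have : w * (u - 1) = 0 := by linear_combination h
    rcases mul_eq_zero.mp this with h' | h'; exact absurd h' hw; exact h'
  have h6 : -(w * u) + w * u ^ 2 ≠ 0 := by
    intro h; apply hu1'; have : w * u * (u - 1) = 0 := by linear_combination h
    rcases mul_eq_zero.mp this with h' | h'
    · rcases mul_eq_zero.mp h' with h'' | h''; exact absurd h'' hw; exact absurd h'' hu0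
    · exact h'
  have hwu : w * (u - 1) ≠ 0 := mul_ne_zero hw hu1'
  have hwuu : w * u * (u - 1) ≠ 0 := mul_ne_zero (mul_ne_zero hw hu0) hu1'
  field_simp [h5, h6, hwu, hwuu, mul_comm]
  have h7 : u + -1 ≠ 0 := by rwa [← sub_eq_add_neg]
  field_simp
  ring
end

section
/- Let u = i (the imaginary unit), so ω = -u - u^{-1} = 0. Let x, M lie in a commutative ℂ-algebra with x invertible, set F = x·M·(1 - M), c_j = (u^j - u - 1 + u^{1-j})/(u-1), and B_j = (u^j - u^{-j})M - (u^{j-1} - u^{1-j})x + c_j for j = 0,1,2,3. Then B_0 · B_1 · B_2 · B_3 = 16(1 - x)·F. -/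
/-! At `u = i` the four factors collapse to `B₀ = 2i·x`, `B₁ = 2i·M`, `B₂ = 2i·(1 - x)` and
`B₃ = 2i·(1 - M)`, so their product is `(2i)⁴ · x(1 - x)M(1 - M) = 16(1 - x)F`. -/

open Complex

lemma two_mul_I_pow_four : (2 * I) ^ 4 = 16 := by
  linear_combination (4 * I ^ 2 - 4) * (4 : ℂ) * I_sq

theorem B_product_omega_zero_general {A : Type} [CommRing A] [Algebra ℂ A]
    (x M : A) :
    let u : ℂ := Complex.I
    let c : ℤ → ℂ := fun j => (u ^ j - u - 1 + u ^ (1 - j)) / (u - 1)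
    let B : ℤ → A := fun j => algebraMap ℂ A (u ^ j - u ^ (-j)) * M -
      algebraMap ℂ A (u ^ (j - 1) - u ^ (1 - j)) * x + algebraMap ℂ A (c j)
    let F : A := x * M * (1 - M)
    B 0 * B 1 * B 2 * B 3 = 16 * (1 - x) * F := by
  intro u c B F
  have hI : I - 1 ≠ 0 := by simp [Complex.ext_iff]
  obtain ⟨hc0, hc1, hc2, hc3⟩ : c 0 = 0 ∧ c 1 = 0 ∧ c 2 = 2 * I ∧ c 3 = 2 * I := by
    simp only [c, u, div_eq_iff hI]
    norm_num [zpow_neg, pow_succ]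
    constructor <;> linear_combination (-2 : ℂ) * I_sq
  have hB0 : B 0 = algebraMap ℂ A (2 * I) * x := by
    simp only [B, u, hc0]; norm_num [zpow_neg, map_ofNat]; ring
  have hB1 : B 1 = algebraMap ℂ A (2 * I) * M := by
    simp only [B, u, hc1]; norm_num [zpow_neg, map_ofNat]; ring
  have hB2 : B 2 = algebraMap ℂ A (2 * I) * (1 - x) := by
    simp only [B, u, hc2]; norm_num [zpow_neg, pow_succ, map_ofNat]; ring
  have hB3 : B 3 = algebraMap ℂ A (2 * I) * (1 - M) := by
    simp only [B, u, hc3]; norm_num [zpow_neg, pow_succ, map_ofNat]; ring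
  calc B 0 * B 1 * B 2 * B 3
      = algebraMap ℂ A ((2 * I) ^ 4) * (x * M * (1 - x) * (1 - M)) := by
        rw [hB0, hB1, hB2, hB3, map_pow]; ring
    _ = 16 * (1 - x) * F := by rw [two_mul_I_pow_four, map_ofNat]; ring

/-- The case `u = i` (`ω = 0`, `u⁴ = 1`) of the invariant construction: with
`F = xM(1-M)`, `c_j = (u^j - u - 1 + u^{1-j})/(u-1)` and
`B_j = (u^j - u^{-j})M - (u^{j-1} - u^{1-j})x + c_j` for `j = 0,1,2,3`, in a
commutative ℂ-algebra with `x` invertible, one has `B₀B₁B₂B₃ = 16(1-x)F`. -/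
theorem B_product_omega_zero {A : Type} [CommRing A] [Algebra ℂ A]
    (x M : A) (hx : IsUnit x) :
    let u : ℂ := Complex.I
    let c : ℤ → ℂ := fun j => (u ^ j - u - 1 + u ^ (1 - j)) / (u - 1)
    let B : ℤ → A := fun j => algebraMap ℂ A (u ^ j - u ^ (-j)) * M -
      algebraMap ℂ A (u ^ (j - 1) - u ^ (1 - j)) * x + algebraMap ℂ A (c j)
    let F : A := x * M * (1 - M)
    B 0 * B 1 * B 2 * B 3 = 16 * (1 - x) * F :=
  B_product_omega_zero_general x M
end

section
/- For all real y with 1/4 < y < 1, the identity arccos((1 - 3y)/(2 y^{3/2})) = 3 · arctan(√(4y - 1)) holds. -/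
/-! With `t = arctan √(4y - 1)` one has `cos t = 1 / (2√y)`, so the triple-angle formula
`cos 3t = 4 cos³ t - 3 cos t` gives `cos 3t = (1 - 3y) / (2 y^{3/2})`. For `1/4 ≤ y ≤ 1`,
`t` lies in `[0, π/3]`, so `3t` lies in the range `[0, π]` of `arccos`. -/

open Real

namespace Real

theorem cos_arctan_sqrt_four_mul_sub_one {y : ℝ} (hy : 1 / 4 ≤ y) :
    cos (arctan √(4 * y - 1)) = 1 / (2 * √y) := by
  rw [cos_arctan, sq_sqrt (by linarith), add_sub_cancel,
    sqrt_mul' _ (by linarith), show (4 : ℝ) = 2 ^ 2 by norm_num, sqrt_sq zero_le_two]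

theorem arctan_sqrt_four_mul_sub_one_le_pi_div_three {y : ℝ} (hy : y ≤ 1) :
    arctan √(4 * y - 1) ≤ π / 3 :=
  arctan_sqrt_three ▸ arctan_mono (sqrt_le_sqrt (by linarith))

theorem cos_three_mul_arctan_sqrt_four_mul_sub_one {y : ℝ} (hy : 1 / 4 ≤ y) :
    cos (3 * arctan √(4 * y - 1)) = (1 - 3 * y) / (2 * y ^ ((3 : ℝ) / 2)) := by
  have hsqrt_sq : √y ^ 2 = y := sq_sqrt (by linarith)
  rw [cos_three_mul, cos_arctan_sqrt_four_mul_sub_one hy, rpow_div_two_eq_sqrt _ (by linarith),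
    rpow_ofNat]
  field_simp
  linear_combination (-12 : ℝ) * hsqrt_sq

end Real

/-- For all real `y` with `1/4 < y < 1`,
`arccos((1 - 3y)/(2 y^{3/2})) = 3 arctan(√(4y - 1))`. -/
theorem arccos_eq_three_arctan (y : ℝ) (h1 : 1 / 4 < y) (h2 : y < 1) :
    Real.arccos ((1 - 3 * y) / (2 * y ^ ((3 : ℝ) / 2))) =
      3 * Real.arctan (Real.sqrt (4 * y - 1)) := by
  rw [← cos_three_mul_arctan_sqrt_four_mul_sub_one h1.le]
  refine arccos_cos ?_ ?_
  · have := arctan_nonneg.mpr (sqrt_nonneg (4 * y - 1))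
    linarith
  · linarith [arctan_sqrt_four_mul_sub_one_le_pi_div_three h2.le]
end

section
/- Let Π ⊆ Ω ⊆ ℂ be path-connected open sets, h : Ω → ℂ \ {0} analytic, and s : Π → ℂ \ {0} analytic with s(z)^2 = h(z) on Π. Then s extends to an analytic function on all of Ω satisfying s(z)^2 = h(z) if and only if for every piecewise-smooth closed curve γ in Ω, (1/(2πi)) ∮_γ h'(z)/h(z) dz is an even integer. -/
/-!
If `S` is a holomorphic square root of `h`, then `(S ∘ γ)' = ½ (h'/h)(γ) γ' · (S ∘ γ)` along a
`C¹` curve, so `S (γ 1) = S (γ 0) · exp (½ ∮_γ h'/h)`; on a closed curve this forces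
`exp (½ ∮_γ h'/h) = 1`, i.e. `∮_γ h'/h ∈ 4πiℤ`.

Conversely, if this holds for every closed curve, `S z := s x₀ · exp (½ ∫_γ h'/h)` does not depend
on the path `γ` from `x₀` to `z`. Near any point `z₀` it equals `S z₀ · exp (½ (g z - g z₀))` for
a primitive `g` of `h'/h` on a disc, so it is holomorphic, and `S ^ 2 = h` because
`h (γ 1) = h (γ 0) · exp (∫_γ h'/h)`. Two continuous square roots of `h` on the connected set `P`
that agree at `x₀` agree everywhere, so `S` extends `s`.
-/

open Complex Set Filter Topology Metric intervalIntegral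

noncomputable def contourIntegral (f : ℂ → ℂ) (γ : ℝ → ℂ) : ℂ :=
  ∫ u in (0 : ℝ)..1, f (γ u) * deriv γ u

theorem exp_inv_two_mul_eq_one_iff {x : ℂ} :
    exp (2⁻¹ * x) = 1 ↔ ∃ n : ℤ, x = 2 * Real.pi * I * (2 * n) := by
  rw [exp_eq_one_iff]
  refine exists_congr fun n => ⟨fun hn => ?_, fun hn => ?_⟩
  · linear_combination 2 * hn
  · linear_combination 2⁻¹ * hn

theorem continuousOn_comp_mul_deriv {U : Set ℂ} {f : ℂ → ℂ} (hf : ContinuousOn f U)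
    {γ : ℝ → ℂ} (hγ : ContDiff ℝ 1 γ) {s : Set ℝ} (hs : MapsTo γ s U) :
    ContinuousOn (fun u => f (γ u) * deriv γ u) s :=
  (hf.comp hγ.continuous.continuousOn hs).mul (hγ.continuous_deriv le_rfl).continuousOn

theorem contourIntegral_eq_sub_of_hasDerivAt {U : Set ℂ} {F f : ℂ → ℂ}
    (hF : ∀ z ∈ U, HasDerivAt F (f z) z) (hf : ContinuousOn f U) {γ : ℝ → ℂ}
    (hγ : ContDiff ℝ 1 γ) (hγU : ∀ u ∈ Icc (0 : ℝ) 1, γ u ∈ U) :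
    contourIntegral f γ = F (γ 1) - F (γ 0) := by
  rw [← uIcc_of_le zero_le_one] at hγU
  exact integral_eq_sub_of_hasDerivAt (f := fun u => F (γ u))
    (fun u hu => (hF _ (hγU u hu)).comp u (hγ.differentiable one_ne_zero u).hasDerivAt)
    (continuousOn_comp_mul_deriv hf hγ hγU).intervalIntegrable

theorem contourIntegral_const (f : ℂ → ℂ) (a : ℂ) : contourIntegral f (fun _ => a) = 0 := by
  simp [contourIntegral]

theorem contourIntegral_reverse (f : ℂ → ℂ) (γ : ℝ → ℂ) :
    contourIntegral f (fun u => γ (1 - u)) = -contourIntegral f γ := by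
  simp only [contourIntegral, deriv_comp_const_sub, mul_neg, integral_neg,
    integral_comp_sub_left (fun u => f (γ u) * deriv γ u), sub_self, sub_zero]

theorem eq_mul_exp_integral_of_hasDerivAt {U : Set ℝ} (hU : IsOpen U) {a b : ℝ} (hab : a ≤ b)
    (hUab : Icc a b ⊆ U) {g φ : ℝ → ℂ} (hg : ContinuousOn g U)
    (hφ : ∀ t ∈ Icc a b, HasDerivAt φ (g t * φ t) t) :
    φ b = φ a * exp (∫ u in a..b, g u) := by
  set K : ℝ → ℂ := fun t => ∫ u in a..t, g u
  have hK : ∀ t ∈ Icc a b, HasDerivAt K (g t) t := fun t ht =>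
    integral_hasDerivAt_right
      (hg.mono ((uIcc_of_le ht.1).trans_subset ((Icc_subset_Icc_right ht.2).trans hUab))
        ).intervalIntegrable
      (hg.stronglyMeasurableAtFilter hU t (hUab ht)) (hg.continuousAt (hU.mem_nhds (hUab ht)))
  have hconst : ∫ _ in a..b, (0 : ℂ) = φ b * exp (-K b) - φ a * exp (-K a) := by
    refine integral_eq_sub_of_hasDerivAt (f := fun t => φ t * exp (-K t)) (fun t ht => ?_)
      intervalIntegrable_const
    rw [uIcc_of_le hab] at ht
    exact ((hφ t ht).fun_mul (hK t ht).fun_neg.cexp).congr_deriv (by ring)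
  have hKa : K a = 0 := integral_same
  rw [integral_zero, hKa, neg_zero, exp_zero, mul_one, eq_comm, sub_eq_zero] at hconst
  rw [← hconst, mul_assoc, ← exp_add, neg_add_cancel, exp_zero, mul_one]

theorem differentiableOn_logDeriv {Ω : Set ℂ} (hΩ : IsOpen Ω) {F : ℂ → ℂ}
    (hF : DifferentiableOn ℂ F Ω) (hF0 : ∀ z ∈ Ω, F z ≠ 0) :
    DifferentiableOn ℂ (logDeriv F) Ω :=
  (hF.analyticOnNhd hΩ).deriv.differentiableOn.div hF hF0

theorem eq_mul_exp_contourIntegral_logDeriv {Ω : Set ℂ} (hΩ : IsOpen Ω) {F : ℂ → ℂ}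
    (hF : DifferentiableOn ℂ F Ω) (hF0 : ∀ z ∈ Ω, F z ≠ 0) {γ : ℝ → ℂ} (hγ : ContDiff ℝ 1 γ)
    (hγΩ : ∀ u ∈ Icc (0 : ℝ) 1, γ u ∈ Ω) :
    F (γ 1) = F (γ 0) * exp (contourIntegral (logDeriv F) γ) := by
  refine eq_mul_exp_integral_of_hasDerivAt (φ := fun t => F (γ t)) (hΩ.preimage hγ.continuous)
    zero_le_one hγΩ
    (continuousOn_comp_mul_deriv (differentiableOn_logDeriv hΩ hF hF0).continuousOn hγ
      (mapsTo_preimage _ _)) fun t ht => ?_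
  refine ((hF.differentiableAt (hΩ.mem_nhds (hγΩ t ht))).hasDerivAt.comp t
    (hγ.differentiable one_ne_zero t).hasDerivAt).congr_deriv ?_
  rw [logDeriv_apply]
  field_simp [hF0 _ (hγΩ t ht)]

theorem logDeriv_eq_mul_of_pow_eq {Ω : Set ℂ} (hΩ : IsOpen Ω) {F S : ℂ → ℂ}
    (hS : DifferentiableOn ℂ S Ω) {n : ℕ} (hSF : ∀ z ∈ Ω, S z ^ n = F z) {z : ℂ} (hz : z ∈ Ω) :
    logDeriv F z = n * logDeriv S z := by
  rw [← logDeriv_fun_pow (hS.differentiableAt (hΩ.mem_nhds hz)) n]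
  exact (logDeriv_congr_nhds <|
    eventually_of_mem (hΩ.mem_nhds hz) fun w hw => (hSF w hw).symm).eq_of_nhds

/-- A `C¹` path in `Ω` from `a` to `b`, constant near both endpoints so that concatenations are
again `C¹`. -/
structure IsTamePath (Ω : Set ℂ) (γ : ℝ → ℂ) (a b : ℂ) : Prop where
  contDiff : ContDiff ℝ 1 γ
  mem : ∀ u, γ u ∈ Ω
  eventually_eq_start : ∀ᶠ u in 𝓝 0, γ u = a
  eventually_eq_end : ∀ᶠ u in 𝓝 1, γ u = b

namespace IsTamePath

variable {Ω : Set ℂ} {γ : ℝ → ℂ} {a b : ℂ}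

theorem apply_zero (hγ : IsTamePath Ω γ a b) : γ 0 = a :=
  hγ.eventually_eq_start.self_of_nhds

theorem apply_one (hγ : IsTamePath Ω γ a b) : γ 1 = b :=
  hγ.eventually_eq_end.self_of_nhds

theorem mono {Ω' : Set ℂ} (hγ : IsTamePath Ω γ a b) (hΩ : Ω ⊆ Ω') : IsTamePath Ω' γ a b :=
  ⟨hγ.contDiff, fun u => hΩ (hγ.mem u), hγ.eventually_eq_start, hγ.eventually_eq_end⟩

theorem reverse (hγ : IsTamePath Ω γ a b) : IsTamePath Ω (fun u => γ (1 - u)) b a where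
  contDiff := hγ.contDiff.comp (contDiff_const.sub contDiff_id)
  mem u := hγ.mem (1 - u)
  eventually_eq_start :=
    ((by fun_prop : Continuous fun u : ℝ => 1 - u).tendsto' _ _ (by norm_num)).eventually
      hγ.eventually_eq_end
  eventually_eq_end :=
    ((by fun_prop : Continuous fun u : ℝ => 1 - u).tendsto' _ _ (by norm_num)).eventually
      hγ.eventually_eq_start

end IsTamePath

theorem isTamePath_const {Ω : Set ℂ} {a : ℂ} (ha : a ∈ Ω) : IsTamePath Ω (fun _ => a) a a :=
  ⟨contDiff_const, fun _ => ha, .of_forall fun _ => rfl, .of_forall fun _ => rfl⟩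

noncomputable def smoothSegment (x y : ℂ) (u : ℝ) : ℂ :=
  x + Real.smoothTransition (3 * u - 1) • (y - x)

theorem isTamePath_smoothSegment {Ω : Set ℂ} {x y : ℂ} (h : segment ℝ x y ⊆ Ω) :
    IsTamePath Ω (smoothSegment x y) x y where
  contDiff := contDiff_const.add
    ((Real.smoothTransition.contDiff.comp (by fun_prop)).smul contDiff_const)
  mem u := h <| segment_eq_image' ℝ x y ▸
    ⟨_, ⟨Real.smoothTransition.nonneg _, Real.smoothTransition.le_one _⟩, rfl⟩
  eventually_eq_start := by
    filter_upwards [Iio_mem_nhds (by norm_num : (0 : ℝ) < 1 / 3)] with u (hu : u < 1 / 3)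
    simp [smoothSegment, Real.smoothTransition.zero_of_nonpos (by linarith : 3 * u - 1 ≤ 0)]
  eventually_eq_end := by
    filter_upwards [Ioi_mem_nhds (by norm_num : (2 / 3 : ℝ) < 1)] with u (hu : 2 / 3 < u)
    simp [smoothSegment, Real.smoothTransition.one_of_one_le (by linarith : 1 ≤ 3 * u - 1)]

noncomputable def pathConcat (γ₁ γ₂ : ℝ → ℂ) (u : ℝ) : ℂ :=
  if u ≤ 1 / 2 then γ₁ (2 * u) else γ₂ (2 * u - 1)

section PathConcat

variable {Ω : Set ℂ} {γ₁ γ₂ : ℝ → ℂ} {a m b : ℂ}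

theorem eventually_pathConcat_half (h₁ : ∀ᶠ u in 𝓝 1, γ₁ u = m) (h₂ : ∀ᶠ u in 𝓝 0, γ₂ u = m) :
    ∀ᶠ v in 𝓝 (1 / 2 : ℝ), γ₁ (2 * v) = m ∧ γ₂ (2 * v - 1) = m :=
  ((by fun_prop : Continuous fun v : ℝ => 2 * v).tendsto' _ _ (by norm_num)).eventually h₁ |>.and
    (((by fun_prop : Continuous fun v : ℝ => 2 * v - 1).tendsto' _ _ (by norm_num)).eventually h₂)

theorem pathConcat_eventuallyEq_left (h₁ : ∀ᶠ u in 𝓝 1, γ₁ u = m) (h₂ : ∀ᶠ u in 𝓝 0, γ₂ u = m)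
    {u : ℝ} (hu : u ≤ 1 / 2) : pathConcat γ₁ γ₂ =ᶠ[𝓝 u] fun v => γ₁ (2 * v) := by
  rcases hu.lt_or_eq with hu | rfl
  · filter_upwards [Iio_mem_nhds hu] with v (hv : v < 1 / 2)
    rw [pathConcat, if_pos hv.le]
  · filter_upwards [eventually_pathConcat_half h₁ h₂] with v hv
    unfold pathConcat
    split_ifs
    exacts [rfl, hv.2.trans hv.1.symm]

theorem pathConcat_eventuallyEq_right (h₁ : ∀ᶠ u in 𝓝 1, γ₁ u = m) (h₂ : ∀ᶠ u in 𝓝 0, γ₂ u = m)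
    {u : ℝ} (hu : 1 / 2 ≤ u) : pathConcat γ₁ γ₂ =ᶠ[𝓝 u] fun v => γ₂ (2 * v - 1) := by
  rcases hu.lt_or_eq with hu | rfl
  · filter_upwards [Ioi_mem_nhds hu] with v (hv : 1 / 2 < v)
    rw [pathConcat, if_neg (not_le.2 hv)]
  · filter_upwards [eventually_pathConcat_half h₁ h₂] with v hv
    unfold pathConcat
    split_ifs
    exacts [hv.1.trans hv.2.symm, rfl]

theorem deriv_pathConcat_of_le (h₁ : ∀ᶠ u in 𝓝 1, γ₁ u = m) (h₂ : ∀ᶠ u in 𝓝 0, γ₂ u = m)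
    {u : ℝ} (hu : u ≤ 1 / 2) : deriv (pathConcat γ₁ γ₂) u = 2 * deriv γ₁ (2 * u) := by
  rw [(pathConcat_eventuallyEq_left h₁ h₂ hu).deriv_eq, deriv_comp_mul_left, real_smul,
    ofReal_ofNat]

theorem deriv_pathConcat_of_ge (h₁ : ∀ᶠ u in 𝓝 1, γ₁ u = m) (h₂ : ∀ᶠ u in 𝓝 0, γ₂ u = m)
    {u : ℝ} (hu : 1 / 2 ≤ u) : deriv (pathConcat γ₁ γ₂) u = 2 * deriv γ₂ (2 * u - 1) := by
  have := deriv_comp_mul_left (2 : ℝ) (fun w => γ₂ (w - 1)) u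
  rw [deriv_comp_sub_const] at this
  rw [(pathConcat_eventuallyEq_right h₁ h₂ hu).deriv_eq, this, real_smul, ofReal_ofNat]

theorem IsTamePath.trans (h₁ : IsTamePath Ω γ₁ a m) (h₂ : IsTamePath Ω γ₂ m b) :
    IsTamePath Ω (pathConcat γ₁ γ₂) a b where
  contDiff := contDiff_iff_contDiffAt.2 fun u => by
    rcases le_total u (1 / 2) with hu | hu
    · exact (h₁.contDiff.comp (by fun_prop)).contDiffAt.congr_of_eventuallyEq
        (pathConcat_eventuallyEq_left h₁.eventually_eq_end h₂.eventually_eq_start hu)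
    · exact (h₂.contDiff.comp (by fun_prop)).contDiffAt.congr_of_eventuallyEq
        (pathConcat_eventuallyEq_right h₁.eventually_eq_end h₂.eventually_eq_start hu)
  mem u := by
    unfold pathConcat
    split_ifs
    exacts [h₁.mem _, h₂.mem _]
  eventually_eq_start := by
    filter_upwards [pathConcat_eventuallyEq_left h₁.eventually_eq_end h₂.eventually_eq_start
      (by norm_num : (0 : ℝ) ≤ 1 / 2), ((by fun_prop : Continuous fun v : ℝ => 2 * v).tendsto' _ _
        (by norm_num)).eventually h₁.eventually_eq_start] with v hv hv'
    rw [hv, hv']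
  eventually_eq_end := by
    filter_upwards [pathConcat_eventuallyEq_right h₁.eventually_eq_end h₂.eventually_eq_start
      (by norm_num : (1 / 2 : ℝ) ≤ 1), ((by fun_prop : Continuous fun v : ℝ => 2 * v - 1).tendsto'
        _ _ (by norm_num)).eventually h₂.eventually_eq_end] with v hv hv'
    rw [hv, hv']

theorem contourIntegral_pathConcat {f : ℂ → ℂ} (hf : ContinuousOn f Ω)
    (h₁ : IsTamePath Ω γ₁ a m) (h₂ : IsTamePath Ω γ₂ m b) :
    contourIntegral f (pathConcat γ₁ γ₂) = contourIntegral f γ₁ + contourIntegral f γ₂ := by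
  have hE₁ := h₁.eventually_eq_end
  have hE₂ := h₂.eventually_eq_start
  have hint : Continuous fun u => f (pathConcat γ₁ γ₂ u) * deriv (pathConcat γ₁ γ₂) u :=
    continuousOn_univ.1 <| continuousOn_comp_mul_deriv hf (h₁.trans h₂).contDiff
      fun u _ => (h₁.trans h₂).mem u
  have hleft : ∫ u in (0 : ℝ)..1 / 2, f (pathConcat γ₁ γ₂ u) * deriv (pathConcat γ₁ γ₂) u =
      contourIntegral f γ₁ := by
    rw [integral_congr (g := fun u => 2 * (f (γ₁ (2 * u)) * deriv γ₁ (2 * u))) fun u hu => ?_,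
      integral_const_mul, integral_comp_mul_left (fun w => f (γ₁ w) * deriv γ₁ w) two_ne_zero]
    · norm_num [contourIntegral, ← mul_assoc]
    · rw [uIcc_of_le (by norm_num)] at hu
      rw [(pathConcat_eventuallyEq_left hE₁ hE₂ hu.2).self_of_nhds,
        deriv_pathConcat_of_le hE₁ hE₂ hu.2]
      ring
  have hright : ∫ u in (1 / 2 : ℝ)..1, f (pathConcat γ₁ γ₂ u) * deriv (pathConcat γ₁ γ₂) u =
      contourIntegral f γ₂ := by
    rw [integral_congr (g := fun u => 2 * (f (γ₂ (2 * u - 1)) * deriv γ₂ (2 * u - 1)))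
      fun u hu => ?_, integral_const_mul,
      integral_comp_mul_sub (fun w => f (γ₂ w) * deriv γ₂ w) two_ne_zero]
    · norm_num [contourIntegral, ← mul_assoc]
    · rw [uIcc_of_le (by norm_num)] at hu
      rw [(pathConcat_eventuallyEq_right hE₁ hE₂ hu.1).self_of_nhds,
        deriv_pathConcat_of_ge hE₁ hE₂ hu.1]
      ring
  rw [contourIntegral, ← integral_add_adjacent_intervals (hint.intervalIntegrable 0 (1 / 2))
    (hint.intervalIntegrable (1 / 2) 1), hleft, hright]

end PathConcat

theorem exists_isTamePath {Ω : Set ℂ} (hΩ : IsOpen Ω) (hΩc : IsPreconnected Ω) {a b : ℂ}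
    (ha : a ∈ Ω) (hb : b ∈ Ω) : ∃ γ, IsTamePath Ω γ a b := by
  refine hΩc.induction₂' (fun x y => ∃ γ, IsTamePath Ω γ x y) (fun x hx => ?_)
    (fun _ _ _ _ _ _ ⟨_, h₁⟩ ⟨_, h₂⟩ => ⟨_, h₁.trans h₂⟩) ha hb
  obtain ⟨r, hr, hball⟩ := Metric.isOpen_iff.1 hΩ x hx
  have hseg {p q : ℂ} (hp : p ∈ ball x r) (hq : q ∈ ball x r) : segment ℝ p q ⊆ Ω :=
    ((convex_ball x r).segment_subset hp hq).trans hball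
  filter_upwards [nhdsWithin_le_nhds (ball_mem_nhds x hr)] with y hy
  exact ⟨⟨_, isTamePath_smoothSegment (hseg (mem_ball_self hr) hy)⟩,
    ⟨_, isTamePath_smoothSegment (hseg hy (mem_ball_self hr))⟩⟩

section Monodromy

variable {Ω : Set ℂ} {f : ℂ → ℂ} {c a : ℂ}

theorem IsTamePath.exp_mul_contourIntegral_eq (hf : ContinuousOn f Ω)
    (hloop : ∀ γ, IsTamePath Ω γ a a → exp (c * contourIntegral f γ) = 1) {γ γ' : ℝ → ℂ}
    {b : ℂ} (hγ : IsTamePath Ω γ a b) (hγ' : IsTamePath Ω γ' a b) :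
    exp (c * contourIntegral f γ) = exp (c * contourIntegral f γ') := by
  have h := hloop _ (hγ.trans hγ'.reverse)
  rw [contourIntegral_pathConcat hf hγ hγ'.reverse, contourIntegral_reverse, mul_add, exp_add,
    mul_neg, exp_neg] at h
  exact (mul_inv_eq_one₀ (exp_ne_zero _)).1 h

theorem exists_forall_isTamePath_eq_exp_mul_contourIntegral (hf : ContinuousOn f Ω)
    (hloop : ∀ γ, IsTamePath Ω γ a a → exp (c * contourIntegral f γ) = 1) :
    ∃ Φ : ℂ → ℂ, ∀ b γ, IsTamePath Ω γ a b → Φ b = exp (c * contourIntegral f γ) := by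
  classical
  refine ⟨fun b => if hb : ∃ γ, IsTamePath Ω γ a b then exp (c * contourIntegral f hb.choose)
    else 0, fun b γ hγ => (dif_pos ⟨γ, hγ⟩).trans ?_⟩
  exact (⟨γ, hγ⟩ : ∃ γ, IsTamePath Ω γ a b).choose_spec.exp_mul_contourIntegral_eq hf hloop hγ

theorem differentiableOn_of_forall_isTamePath_eq_exp_mul_contourIntegral (hΩ : IsOpen Ω)
    (hΩc : IsPreconnected Ω) (ha : a ∈ Ω) (hf : DifferentiableOn ℂ f Ω) {Φ : ℂ → ℂ}
    (hΦ : ∀ b γ, IsTamePath Ω γ a b → Φ b = exp (c * contourIntegral f γ)) :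
    DifferentiableOn ℂ Φ Ω := by
  intro z₀ hz₀
  obtain ⟨r, hr, hball⟩ := Metric.isOpen_iff.1 hΩ z₀ hz₀
  obtain ⟨g, hg⟩ := (hf.mono hball).isExactOn_ball
  obtain ⟨Γ, hΓ⟩ := exists_isTamePath hΩ hΩc ha hz₀
  have hlocal : ∀ z ∈ ball z₀ r, Φ z = exp (c * (contourIntegral f Γ + (g z - g z₀))) := by
    intro z hz
    have hσ := isTamePath_smoothSegment ((convex_ball z₀ r).segment_subset (mem_ball_self hr) hz)
    rw [hΦ z _ (hΓ.trans (hσ.mono hball)), contourIntegral_pathConcat hf.continuousOn hΓ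
      (hσ.mono hball), contourIntegral_eq_sub_of_hasDerivAt hg (hf.continuousOn.mono hball)
      hσ.contDiff fun u _ => hσ.mem u, hσ.apply_one, hσ.apply_zero]
  refine DifferentiableAt.differentiableWithinAt ?_
  refine DifferentiableAt.congr_of_eventuallyEq ?_ (eventually_of_mem (ball_mem_nhds z₀ hr) hlocal)
  exact ((((hg z₀ (mem_ball_self hr)).differentiableAt.sub_const _).const_add _).const_mul _).cexp

end Monodromy

theorem exp_inv_mul_contourIntegral_logDeriv_eq_one {Ω : Set ℂ} (hΩ : IsOpen Ω) {F S : ℂ → ℂ}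
    (hS : DifferentiableOn ℂ S Ω) (hF0 : ∀ z ∈ Ω, F z ≠ 0) {n : ℕ} (hn : n ≠ 0)
    (hSF : ∀ z ∈ Ω, S z ^ n = F z) {γ : ℝ → ℂ} (hγ : ContDiff ℝ 1 γ)
    (hγΩ : ∀ u ∈ Icc (0 : ℝ) 1, γ u ∈ Ω) (hγ01 : γ 0 = γ 1) :
    exp ((n : ℂ)⁻¹ * contourIntegral (logDeriv F) γ) = 1 := by
  have hS0 : ∀ z ∈ Ω, S z ≠ 0 := fun z hz hSz => hF0 z hz (by rw [← hSF z hz, hSz, zero_pow hn])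
  have hlog : contourIntegral (logDeriv F) γ = n * contourIntegral (logDeriv S) γ := by
    rw [contourIntegral, contourIntegral, ← integral_const_mul]
    refine integral_congr fun u hu => ?_
    rw [uIcc_of_le zero_le_one] at hu
    simp only [logDeriv_eq_mul_of_pow_eq hΩ hS hSF (hγΩ u hu), mul_assoc]
  have hmono := eq_mul_exp_contourIntegral_logDeriv hΩ hS hS0 hγ hγΩ
  rw [hγ01, eq_comm, mul_eq_left₀ (hS0 _ (hγΩ 1 ⟨zero_le_one, le_rfl⟩))] at hmono
  rwa [hlog, ← mul_assoc, inv_mul_cancel₀ (Nat.cast_ne_zero.2 hn), one_mul]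

theorem exists_pow_eq_of_exp_inv_mul_contourIntegral_logDeriv_eq_one {Ω : Set ℂ}
    (hΩ : IsOpen Ω) (hΩc : IsPreconnected Ω) {F : ℂ → ℂ} (hF : DifferentiableOn ℂ F Ω)
    (hF0 : ∀ z ∈ Ω, F z ≠ 0) {n : ℕ} (hn : n ≠ 0) {a c : ℂ} (ha : a ∈ Ω) (hc : c ^ n = F a)
    (hloop : ∀ γ, IsTamePath Ω γ a a → exp ((n : ℂ)⁻¹ * contourIntegral (logDeriv F) γ) = 1) :
    ∃ S : ℂ → ℂ, DifferentiableOn ℂ S Ω ∧ S a = c ∧ ∀ z ∈ Ω, S z ^ n = F z := by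
  have hlog := differentiableOn_logDeriv hΩ hF hF0
  obtain ⟨Φ, hΦ⟩ := exists_forall_isTamePath_eq_exp_mul_contourIntegral hlog.continuousOn hloop
  refine ⟨fun z => c * Φ z, ((differentiableOn_of_forall_isTamePath_eq_exp_mul_contourIntegral
    hΩ hΩc ha hlog hΦ).const_mul c), ?_, fun z hz => ?_⟩
  · simp [hΦ a _ (isTamePath_const ha), contourIntegral_const]
  · obtain ⟨γ, hγ⟩ := exists_isTamePath hΩ hΩc ha hz
    have hmono := eq_mul_exp_contourIntegral_logDeriv hΩ hF hF0 hγ.contDiff fun u _ => hγ.mem u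
    rw [hγ.apply_one, hγ.apply_zero] at hmono
    rw [show (c * Φ z) ^ n = _ from rfl, hΦ z γ hγ, mul_pow, ← exp_nat_mul, ← mul_assoc,
      mul_inv_cancel₀ (Nat.cast_ne_zero.2 hn), one_mul, hc, hmono]

theorem analytic_sqrt_extension_iff_general (Ω P : Set ℂ) (hPΩ : P ⊆ Ω)
    (hΩo : IsOpen Ω) (hΩc : IsPathConnected Ω)
    (hPc : IsPathConnected P)
    (h s : ℂ → ℂ) (hh : DifferentiableOn ℂ h Ω) (hne : ∀ z ∈ Ω, h z ≠ 0)
    (hs : DifferentiableOn ℂ s P) (hsne : ∀ z ∈ P, s z ≠ 0)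
    (hsq : ∀ z ∈ P, s z ^ 2 = h z) :
    (∃ S : ℂ → ℂ, DifferentiableOn ℂ S Ω ∧ (∀ z ∈ P, S z = s z) ∧
        ∀ z ∈ Ω, S z ^ 2 = h z) ↔
    (∀ γ : ℝ → ℂ, ContDiff ℝ 1 γ → (∀ u ∈ Set.Icc (0 : ℝ) 1, γ u ∈ Ω) → γ 0 = γ 1 →
      ∃ n : ℤ, (∫ u in (0:ℝ)..1, (deriv h (γ u) / h (γ u)) * deriv γ u) =
        2 * Real.pi * Complex.I * (2 * n)) := by
  simp only [← exp_inv_two_mul_eq_one_iff]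
  constructor
  · rintro ⟨S, hS, -, hSh⟩ γ hγ hγΩ hγ01
    exact_mod_cast exp_inv_mul_contourIntegral_logDeriv_eq_one hΩo hS hne two_ne_zero hSh hγ hγΩ
      hγ01
  · intro hloop
    obtain ⟨x₀, hx₀⟩ := hPc.nonempty
    obtain ⟨S, hS, hSx₀, hSh⟩ := exists_pow_eq_of_exp_inv_mul_contourIntegral_logDeriv_eq_one hΩo
      hΩc.isConnected.isPreconnected hh hne two_ne_zero (hPΩ hx₀) (hsq x₀ hx₀) fun γ hγ => by
        exact_mod_cast hloop γ hγ.contDiff (fun u _ => hγ.mem u)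
          (hγ.apply_zero.trans hγ.apply_one.symm)
    refine ⟨S, hS, ?_, hSh⟩
    exact hPc.isConnected.isPreconnected.eq_of_sq_eq (hS.continuousOn.mono hPΩ) hs.continuousOn
      (fun z hz => by simp only [Pi.pow_apply, hSh z (hPΩ hz), hsq z hz]) (hsne _) hx₀ hSx₀

/-- Let `P ⊆ Ω ⊆ ℂ` be path-connected open sets, `h : Ω → ℂ \ {0}` analytic and
nowhere vanishing, and `s : P → ℂ \ {0}` analytic with `s² = h` on `P`. Then `s`
extends to an analytic square root of `h` on all of `Ω` if and only if for every
smooth closed curve `γ` in `Ω`, `(1/(2πi)) ∮_γ h'(z)/h(z) dz` is an even integer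
(stated in the form `∮_γ h'/h = 2πi · 2n`). -/
theorem analytic_sqrt_extension_iff (Ω P : Set ℂ) (hPΩ : P ⊆ Ω)
    (hΩo : IsOpen Ω) (hΩc : IsPathConnected Ω)
    (hPo : IsOpen P) (hPc : IsPathConnected P)
    (h s : ℂ → ℂ) (hh : DifferentiableOn ℂ h Ω) (hne : ∀ z ∈ Ω, h z ≠ 0)
    (hs : DifferentiableOn ℂ s P) (hsne : ∀ z ∈ P, s z ≠ 0)
    (hsq : ∀ z ∈ P, s z ^ 2 = h z) :
    (∃ S : ℂ → ℂ, DifferentiableOn ℂ S Ω ∧ (∀ z ∈ P, S z = s z) ∧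
        ∀ z ∈ Ω, S z ^ 2 = h z) ↔
    (∀ γ : ℝ → ℂ, ContDiff ℝ 1 γ → (∀ u ∈ Set.Icc (0 : ℝ) 1, γ u ∈ Ω) → γ 0 = γ 1 →
      ∃ n : ℤ, (∫ u in (0:ℝ)..1, (deriv h (γ u) / h (γ u)) * deriv γ u) =
        2 * Real.pi * Complex.I * (2 * n)) :=
  analytic_sqrt_extension_iff_general Ω P hPΩ hΩo hΩc hPc h s hh hne hs hsne hsq
end
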